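/- If U is an open subset of a smooth manifold M obtained by removing a closed smooth submanifold of real codimension 2, then the inclusion U ↪ M induces a surjection on fundamental groups. -/

import Mathlib

/-!
STATEMENT 3: If `U` is an open subset of a smooth manifold `M` obtained by removing a
closed smooth submanifold of real codimension `2`, then the inclusion `U ↪ M` induces a
surjection on fundamental groups.

The removed submanifold is encoded as a smooth embedding `e : N → M` of a smooth
manifold `N` of dimension `m` with `m + 2 = n`, whose range is exactly the (closed)
complement `M ∖ U`.
-/

open CategoryTheory
open scoped FundamentalGroupoid Manifold

universe u

/-- The homomorphism induced by a continuous map on fundamental groups. -/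
noncomputable def inducedPi1 {X Y : Type u} [TopologicalSpace X] [TopologicalSpace Y]
    (f : C(X, Y)) (x : X) :
    Aut (FundamentalGroupoid.mk x) →* Aut (FundamentalGroupoid.mk (f x)) :=
  let F : FundamentalGroupoid X ⥤ FundamentalGroupoid Y :=
    πₘ (TopCat.ofHom f)
  F.mapAut (⟨x⟩ : FundamentalGroupoid X)

/-!
Each point of `M` has a chart ball `B` in which the removed submanifold appears as a set `S`.
A cone over `S` with any apex is locally a `C¹` image of `ℝ × ℝᵐ`, so it has Hausdorff dimension
at most `m + 1 < n` and dense complement. Hence two points `a, b ∈ B ∖ S` are joined in `B ∖ S`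
by a broken line `a → z → b`, choosing `z` off the cones over `S` with apexes `a` and `b`; as `B`
is simply connected, every path in `B` with endpoints in `U` is homotopic to one in `U`.

A loop in `M` based in `U` is then pushed into `U` by a continuous induction along it: the
initial piece up to time `s` is the piece up to a nearby time `t` followed by a short arc inside
one ball, and detours through nearby points of the dense set `U` cut everything into paths of the
previous kind.
-/

open Set Topology Module unitInterval
open scoped ENNReal

namespace Path

variable {X : Type*} [TopologicalSpace X] {a b : X}

def DeformsInto (γ : Path a b) (U : Set X) : Prop :=
  ∃ δ : Path a b, range δ ⊆ U ∧ γ.Homotopic δ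

theorem Homotopic.deformsInto_iff {γ γ' : Path a b} (h : γ.Homotopic γ') {U : Set X} :
    γ.DeformsInto U ↔ γ'.DeformsInto U :=
  ⟨fun ⟨δ, hδ, hγ⟩ => ⟨δ, hδ, h.symm.trans hγ⟩, fun ⟨δ, hδ, hγ⟩ => ⟨δ, hδ, h.trans hγ⟩⟩

theorem DeformsInto.trans {c : X} {γ : Path a b} {γ' : Path b c} {U : Set X}
    (h : γ.DeformsInto U) (h' : γ'.DeformsInto U) : (γ.trans γ').DeformsInto U := by
  obtain ⟨δ, hδ, hγ⟩ := h
  obtain ⟨δ', hδ', hγ'⟩ := h'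
  exact ⟨δ.trans δ', (trans_range δ δ').trans_subset (union_subset hδ hδ'), hγ.hcomp hγ'⟩

@[simp]
theorem deformsInto_cast {a' b' : X} (γ : Path a b) (ha : a' = a) (hb : b' = b) {U : Set X} :
    (γ.cast ha hb).DeformsInto U ↔ γ.DeformsInto U := by
  subst ha hb; rfl

def codRestrict (γ : Path a b) {s : Set X} (h : range γ ⊆ s) :
    Path (⟨a, γ.source ▸ h (mem_range_self 0)⟩ : s) ⟨b, γ.target ▸ h (mem_range_self 1)⟩ where
  toFun t := ⟨γ t, h (mem_range_self t)⟩
  source' := Subtype.ext γ.source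
  target' := Subtype.ext γ.target

@[simp]
theorem map_codRestrict (γ : Path a b) {s : Set X} (h : range γ ⊆ s) :
    (γ.codRestrict h).map continuous_subtype_val = γ :=
  rfl

theorem homotopic_of_range_subset {s : Set X} [SimplyConnectedSpace s] {γ γ' : Path a b}
    (h : range γ ⊆ s) (h' : range γ' ⊆ s) : γ.Homotopic γ' := by
  simpa using (SimplyConnectedSpace.paths_homotopic (γ.codRestrict h) (γ'.codRestrict h')).map
    ⟨_, continuous_subtype_val⟩

theorem homotopic_insert_backtracks {x y z w v u : X} (p : Path x y) (q : Path y z)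
    (r : Path z w) (d₁ : Path y v) (d₂ : Path z u) :
    ((p.trans q).trans r).Homotopic
      (((p.trans d₁).trans ((d₁.symm.trans q).trans d₂)).trans (d₂.symm.trans r)) := by
  rw [← Homotopic.Quotient.eq]
  simp only [Homotopic.Quotient.mk_trans, Homotopic.Quotient.mk_symm,
    Homotopic.Quotient.trans_assoc]
  rw [← Homotopic.Quotient.trans_assoc (.mk d₂), Homotopic.Quotient.trans_symm,
    Homotopic.Quotient.refl_trans, ← Homotopic.Quotient.trans_assoc (.mk d₁),
    Homotopic.Quotient.trans_symm, Homotopic.Quotient.refl_trans]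

end Path

section Deformation

variable {X : Type*} [TopologicalSpace X]

def PathsDeformInto (V U : Set X) : Prop :=
  ∀ ⦃a b : X⦄, a ∈ U → b ∈ U → ∀ γ : Path a b, range γ ⊆ V → γ.DeformsInto U

theorem pathsDeformInto_of_joinedIn {V U : Set X} [SimplyConnectedSpace V]
    (h : ∀ a ∈ V ∩ U, ∀ b ∈ V ∩ U, JoinedIn (V ∩ U) a b) : PathsDeformInto V U := by
  intro a b ha hb γ hγ
  have hab := h a ⟨hγ ⟨0, γ.source⟩, ha⟩ b ⟨hγ ⟨1, γ.target⟩, hb⟩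
  exact ⟨hab.somePath, range_subset_iff.2 fun t => (hab.somePath_mem t).2,
    Path.homotopic_of_range_subset hγ (range_subset_iff.2 fun t => (hab.somePath_mem t).1)⟩

theorem Dense.exists_path_range_subset [LocallyPathConnectedSpace X] {U O : Set X}
    (hU : Dense U) {x : X} (hO : O ∈ 𝓝 x) : ∃ a ∈ U, ∃ ρ : Path x a, range ρ ⊆ O := by
  obtain ⟨W, ⟨hWx, hWc⟩, hWO⟩ := (path_connected_basis x).mem_iff.1 hO
  obtain ⟨a, haW, haU⟩ := mem_closure_iff_nhds.1 (hU x) W hWx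
  have hxa := hWc.joinedIn x (mem_of_mem_nhds hWx) a haW
  exact ⟨a, haU, hxa.somePath, range_subset_iff.2 fun t => hWO (hxa.somePath_mem t)⟩

namespace Path

variable {a b : X}

def SubpathDeformsInto (U : Set X) (V : X → Set X) (γ : Path a b) (t : I) : Prop :=
  ∀ a' ∈ U, ∀ ρ : Path (γ t) a', range ρ ⊆ V (γ t) → ((γ.subpath 0 t).trans ρ).DeformsInto U

variable [LocallyPathConnectedSpace X] {U W : Set X} {V : X → Set X}

theorem SubpathDeformsInto.of_mem_nhds (hU : Dense U) (hVn : ∀ x, V x ∈ 𝓝 x)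
    (hV : ∀ x, PathsDeformInto (V x) U) (hW : PathsDeformInto W U) {γ : Path a b} {t s : I}
    (ht : W ∈ 𝓝 (γ t)) (hs : W ∈ 𝓝 (γ s)) (hts : γ '' uIcc t s ⊆ W)
    (h : γ.SubpathDeformsInto U V t) : γ.SubpathDeformsInto U V s := by
  intro a' ha' ρ' hρ'
  obtain ⟨a₀, ha₀, ρ₀, hρ₀⟩ := hU.exists_path_range_subset (Filter.inter_mem (hVn (γ t)) ht)
  obtain ⟨a₁, ha₁, r, hr⟩ := hU.exists_path_range_subset (Filter.inter_mem hs (hVn (γ s)))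
  rw [((Homotopic.symm ⟨Homotopy.subpathTransSubpath γ 0 t s⟩).hcomp (.refl ρ')).deformsInto_iff,
    (homotopic_insert_backtracks _ _ ρ' ρ₀ r).deformsInto_iff]
  refine ((h a₀ ha₀ ρ₀ (hρ₀.trans inter_subset_left)).trans (hW ha₀ ha₁ _ ?_)).trans
    (hV (γ s) ha₁ ha' _ ?_)
  · simp only [trans_range, symm_range, range_subpath]
    exact union_subset (union_subset (hρ₀.trans inter_subset_right) hts)
      (hr.trans inter_subset_left)
  · simp only [trans_range, symm_range]
    exact union_subset (hr.trans inter_subset_right) hρ'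

theorem eventually_subpathDeformsInto_iff (hU : Dense U) (hVn : ∀ x, V x ∈ 𝓝 x)
    (hV : ∀ x, PathsDeformInto (V x) U) (γ : Path a b) (t : I) :
    ∀ᶠ s in 𝓝 t, γ.SubpathDeformsInto U V s ↔ γ.SubpathDeformsInto U V t := by
  have hγ : γ ⁻¹' interior (V (γ t)) ∈ 𝓝 t :=
    γ.continuous.continuousAt.preimage_mem_nhds (interior_mem_nhds.2 (hVn (γ t)))
  -- `ordConnectedComponent` provides the times `s` with `γ '' uIcc t s ⊆ interior (V (γ t))`
  filter_upwards [ordConnectedComponent_mem_nhds.2 hγ] with s hs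
  have hts : γ '' uIcc t s ⊆ V (γ t) :=
    image_subset_iff.2 (hs.trans (preimage_mono interior_subset))
  have hWs : V (γ t) ∈ 𝓝 (γ s) := mem_interior_iff_mem_nhds.1 (hs right_mem_uIcc)
  exact ⟨(·.of_mem_nhds hU hVn hV (hV _) hWs (hVn _) (uIcc_comm t s ▸ hts)),
    (·.of_mem_nhds hU hVn hV (hV _) (hVn _) hWs hts)⟩

theorem deformsInto_of_dense (hU : Dense U) (hloc : ∀ x, ∃ V ∈ 𝓝 x, PathsDeformInto V U)
    (γ : Path a b) (ha : a ∈ U) (hb : b ∈ U) : γ.DeformsInto U := by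
  choose V hVn hV using hloc
  have hconst : IsLocallyConstant (γ.SubpathDeformsInto U V) :=
    (IsLocallyConstant.iff_eventually_eq _).2 fun t =>
      (eventually_subpathDeformsInto_iff hU hVn hV γ t).mono fun _ => propext
  have h0 : γ.SubpathDeformsInto U V 0 := fun a' ha' ρ hρ => by
    rw [subpath_self, (Homotopic.refl_trans ρ).deformsInto_iff]
    exact hV _ (by simpa using ha) ha' ρ hρ
  have h1 := hconst.apply_eq_of_preconnectedSpace 0 1 ▸ h0
  have := h1 _ (by simpa using hb) (.refl _) (by simpa using mem_of_mem_nhds (hVn _))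
  rwa [(Homotopic.trans_refl _).deformsInto_iff, subpath_zero_one, deformsInto_cast] at this

end Path

end Deformation

theorem inducedPi1_subtypeVal_surjective {X : Type u} [TopologicalSpace X] {U : Set X} (x : U)
    (h : ∀ γ : Path (x : X) x, γ.DeformsInto U) :
    Function.Surjective (inducedPi1 ⟨Subtype.val, continuous_subtype_val⟩ x) := by
  intro g
  obtain ⟨γ, hγ⟩ :=
    Path.Homotopic.Quotient.mk_surjective (g.hom : Path.Homotopic.Quotient (x : X) x)
  obtain ⟨δ, hδU, hγδ⟩ := h γ
  refine ⟨(Groupoid.isoEquivHom _ _).symm (.mk (δ.codRestrict hδU)), Iso.ext ?_⟩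
  change Path.Homotopic.Quotient.mk ((δ.codRestrict hδU).map continuous_subtype_val) = _
  rw [Path.map_codRestrict, ← hγ]
  exact Path.Homotopic.Quotient.eq.2 hγδ.symm

section LineCone

variable {E : Type*} [NormedAddCommGroup E] [NormedSpace ℝ E]

noncomputable def lineCone (a : E) (S : Set E) : Set E :=
  (fun p : ℝ × E => AffineMap.lineMap a p.2 p.1) '' (univ ×ˢ S)

theorem subset_lineCone (a : E) (S : Set E) : S ⊆ lineCone a S :=
  fun s hs => ⟨(1, s), ⟨trivial, hs⟩, AffineMap.lineMap_apply_one a s⟩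

theorem disjoint_segment_of_notMem_lineCone {a z : E} {S : Set E} (ha : a ∉ S)
    (hz : z ∉ lineCone a S) : Disjoint (segment ℝ a z) S := by
  rw [segment_eq_image_lineMap, disjoint_left]
  rintro _ ⟨t, -, rfl⟩ hS
  rcases eq_or_ne t 0 with rfl | ht
  · exact ha (by simpa using hS)
  · exact hz ⟨(t⁻¹, AffineMap.lineMap a z t), ⟨trivial, hS⟩, by simp [inv_mul_cancel₀ ht]⟩

theorem joinedIn_diff_of_dimH_lineCone_lt [FiniteDimensional ℝ E] {C S : Set E}
    (hC : Convex ℝ C) (hCo : IsOpen C) (hS : ∀ a, dimH (lineCone a S) < finrank ℝ E)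
    {a b : E} (ha : a ∈ C \ S) (hb : b ∈ C \ S) : JoinedIn (C \ S) a b := by
  have hdense : Dense (lineCone a S ∪ lineCone b S)ᶜ :=
    dense_compl_of_dimH_lt_finrank (by rw [dimH_union]; exact max_lt (hS a) (hS b))
  obtain ⟨z, hzC, hz⟩ := hdense.inter_open_nonempty C hCo ⟨a, ha.1⟩
  rw [mem_compl_iff, mem_union, not_or] at hz
  have haz : segment ℝ a z ⊆ C \ S :=
    subset_sdiff.2 ⟨hC.segment_subset ha.1 hzC, disjoint_segment_of_notMem_lineCone ha.2 hz.1⟩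
  have hbz : segment ℝ b z ⊆ C \ S :=
    subset_sdiff.2 ⟨hC.segment_subset hb.1 hzC, disjoint_segment_of_notMem_lineCone hb.2 hz.2⟩
  exact (JoinedIn.of_segment_subset haz).trans (JoinedIn.of_segment_subset hbz).symm

theorem dimH_lineCone_image_le {F : Type*} [NormedAddCommGroup F] [NormedSpace ℝ F]
    [FiniteDimensional ℝ F] (a : E) {g : F → E} {A : Set F} (hg : ContDiffOn ℝ 1 g A)
    (hA : Convex ℝ A) : dimH (lineCone a (g '' A)) ≤ (finrank ℝ F + 1 : ℕ) := by
  set G : ℝ × F → E := fun p => AffineMap.lineMap a (g p.2) p.1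
  have hG : ContDiffOn ℝ 1 G (univ ×ˢ A) := by
    simp only [G, AffineMap.lineMap_apply_module']
    exact (contDiffOn_fst.smul ((hg.comp contDiffOn_snd fun p hp => hp.2).sub
      contDiffOn_const)).add contDiffOn_const
  have hcone : lineCone a (g '' A) ⊆ G '' (univ ×ˢ A) := by
    rintro _ ⟨⟨t, _⟩, ⟨-, y, hy, rfl⟩, rfl⟩
    exact ⟨(t, y), ⟨trivial, hy⟩, rfl⟩
  calc dimH (lineCone a (g '' A)) ≤ dimH (univ ×ˢ A) :=
        (dimH_mono hcone).trans (hG.dimH_image_le (convex_univ.prod hA) subset_rfl)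
    _ ≤ dimH (univ : Set (ℝ × F)) := dimH_mono (subset_univ _)
    _ = (finrank ℝ F + 1 : ℕ) := by
        rw [Real.dimH_univ_eq_finrank, finrank_prod, finrank_self, add_comm]

theorem dimH_lineCone_le_of_forall_mem_nhdsWithin [SecondCountableTopology E] {a : E}
    {S : Set E} {d : ℝ≥0∞} (h : ∀ s ∈ S, ∃ T ∈ 𝓝[S] s, dimH (lineCone a T) ≤ d) :
    dimH (lineCone a S) ≤ d := by
  choose! T hT hd using h
  obtain ⟨c, hcS, hc, hcover⟩ := TopologicalSpace.countable_cover_nhdsWithin hT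
  have hsub : lineCone a S ⊆ ⋃ s ∈ c, lineCone a (T s) := by
    rintro _ ⟨⟨r, y⟩, ⟨-, hy⟩, rfl⟩
    obtain ⟨s, hs, hyT⟩ := mem_iUnion₂.1 (hcover hy)
    exact mem_iUnion₂.2 ⟨s, hs, mem_image_of_mem _ ⟨trivial, hyT⟩⟩
  calc dimH (lineCone a S) ≤ ⨆ s ∈ c, dimH (lineCone a (T s)) :=
        (dimH_mono hsub).trans_eq (dimH_bUnion hc _)
    _ ≤ d := iSup₂_le fun s hs => hd s (hcS hs)

end LineCone

section ChartImage

variable {H : Type*} [TopologicalSpace H] {M : Type*} [TopologicalSpace M] [ChartedSpace H M]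

variable (H) in
def chartImage (R : Set M) (p : M) : Set H :=
  (chartAt H p).target ∩ (chartAt H p).symm ⁻¹' R

theorem symm_image_diff_chartImage {R : Set M} {p : M} {B : Set H}
    (hB : B ⊆ (chartAt H p).target) :
    (chartAt H p).symm '' (B \ chartImage H R p) = (chartAt H p).symm '' B ∩ Rᶜ := by
  rw [chartImage, sdiff_inter, sdiff_eq_empty.2 hB, empty_union, sdiff_eq, ← preimage_compl,
    image_inter_preimage]

end ChartImage

section Charts

variable {E : Type*} [NormedAddCommGroup E] [NormedSpace ℝ E]
  {M : Type*} [TopologicalSpace M] [ChartedSpace E M]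

theorem dense_compl_of_dimH_chartImage_lt [FiniteDimensional ℝ E] {R : Set M}
    (hR : ∀ p, dimH (chartImage E R p) < finrank ℝ E) : Dense Rᶜ := by
  rw [dense_iff_inter_open]
  rintro O hO ⟨p, hpO⟩
  set φ := chartAt E p
  have hB : IsOpen (φ '' (O ∩ φ.source)) :=
    φ.isOpen_image_of_subset_source (hO.inter φ.open_source) inter_subset_right
  obtain ⟨y, hyB, hyR⟩ := (dense_compl_of_dimH_lt_finrank (hR p)).inter_open_nonempty _ hB
    ⟨φ p, mem_image_of_mem _ ⟨hpO, mem_chart_source E p⟩⟩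
  obtain ⟨z, hz, rfl⟩ := hyB
  exact ⟨z, hz.1, fun hzR => hyR ⟨φ.map_source hz.2, by rwa [mem_preimage, φ.left_inv hz.2]⟩⟩

theorem exists_mem_nhds_pathsDeformInto_compl [FiniteDimensional ℝ E] {R : Set M} {p : M}
    (hR : ∀ a, dimH (lineCone a (chartImage E R p)) < finrank ℝ E) :
    ∃ V ∈ 𝓝 p, PathsDeformInto V Rᶜ := by
  set φ := chartAt E p
  obtain ⟨r, hr, hB⟩ := Metric.isOpen_iff.1 φ.open_target (φ p) (mem_chart_target E p)
  have : ContractibleSpace (φ.symm '' Metric.ball (φ p) r) :=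
    have := Metric.contractibleSpace_ball (x := φ p) hr
    (φ.symm.homeomorphOfImageSubsetSource hB rfl).symm.contractibleSpace
  refine ⟨φ.symm '' Metric.ball (φ p) r, ?_, pathsDeformInto_of_joinedIn ?_⟩
  · simpa [φ.left_inv (mem_chart_source E p)] using
      φ.symm.image_mem_nhds (φ.map_source (mem_chart_source E p)) (Metric.ball_mem_nhds _ hr)
  · rw [← symm_image_diff_chartImage hB]
    rintro _ ⟨y, hy, rfl⟩ _ ⟨y', hy', rfl⟩
    exact (joinedIn_diff_of_dimH_lineCone_lt (convex_ball _ _) Metric.isOpen_ball hR hy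
      hy').map_continuousOn (φ.continuousOn_symm.mono (sdiff_subset.trans hB))

end Charts

section Submanifold

variable {E : Type*} [NormedAddCommGroup E] [NormedSpace ℝ E]
  {F : Type*} [NormedAddCommGroup F] [NormedSpace ℝ F]
  {M : Type*} [TopologicalSpace M] [ChartedSpace E M]
  {N : Type*} [TopologicalSpace N] [ChartedSpace F N]
  {k : WithTop ℕ∞} [IsManifold 𝓘(ℝ, E) k M] [IsManifold 𝓘(ℝ, F) k N] {e : N → M}

theorem exists_contDiffOn_ball_image_mem_nhdsWithin (hk : 1 ≤ k)
    (he : ContMDiff 𝓘(ℝ, F) 𝓘(ℝ, E) k e) (he' : IsEmbedding e) {p : M} {y : E}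
    (hy : y ∈ chartImage E (range e) p) :
    ∃ (c : F) (r : ℝ) (g : F → E), ContDiffOn ℝ 1 g (Metric.ball c r) ∧
      g '' Metric.ball c r ∈ 𝓝[chartImage E (range e) p] y := by
  obtain ⟨hyt, w, hw⟩ := hy
  set φ := chartAt E p
  set ψ := chartAt F w
  have hg : ContDiffOn ℝ k (φ ∘ e ∘ ψ.symm) (ψ.target ∩ ψ.symm ⁻¹' (e ⁻¹' φ.source)) := by
    simpa using (contMDiff_iff.1 he).2 w p
  have hD : IsOpen (ψ.target ∩ ψ.symm ⁻¹' (e ⁻¹' φ.source)) :=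
    ψ.isOpen_inter_preimage_symm (φ.open_source.preimage he.continuous)
  have hwD : ψ w ∈ ψ.target ∩ ψ.symm ⁻¹' (e ⁻¹' φ.source) := by
    refine ⟨ψ.map_source (mem_chart_source F w), ?_⟩
    rw [mem_preimage, mem_preimage, ψ.left_inv (mem_chart_source F w), hw]
    exact φ.map_target hyt
  obtain ⟨r, hr, hball⟩ := Metric.isOpen_iff.1 hD _ hwD
  have hQ : IsOpen (ψ.symm '' Metric.ball (ψ w) r) :=
    ψ.symm.isOpen_image_of_subset_source Metric.isOpen_ball (hball.trans inter_subset_left)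
  -- `e` being an embedding, near `e w` all of `range e` comes from the chart ball
  obtain ⟨O, hO, hOQ⟩ := he'.isInducing.isOpen_iff.1 hQ
  have hyO : φ.symm y ∈ O := by
    rw [← hw, ← mem_preimage, hOQ]
    exact ⟨ψ w, Metric.mem_ball_self hr, ψ.left_inv (mem_chart_source F w)⟩
  refine ⟨ψ w, r, φ ∘ e ∘ ψ.symm, (hg.of_le hk).mono hball, Filter.mem_of_superset
    (inter_mem_nhdsWithin _ ((φ.continuousAt_symm hyt).preimage_mem_nhds (hO.mem_nhds hyO))) ?_⟩
  rintro y' ⟨⟨hy't, w', hw'⟩, hy'O⟩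
  have hw'Q : w' ∈ e ⁻¹' O := by rwa [mem_preimage, hw']
  rw [hOQ] at hw'Q
  obtain ⟨u, hu, rfl⟩ := hw'Q
  exact ⟨u, hu, by simp only [Function.comp_apply, hw']; exact φ.right_inv hy't⟩

theorem dimH_lineCone_chartImage_range_le [FiniteDimensional ℝ E] [FiniteDimensional ℝ F]
    (hk : 1 ≤ k) (he : ContMDiff 𝓘(ℝ, F) 𝓘(ℝ, E) k e) (he' : IsEmbedding e) (p : M)
    (a : E) : dimH (lineCone a (chartImage E (range e) p)) ≤ (finrank ℝ F + 1 : ℕ) :=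
  dimH_lineCone_le_of_forall_mem_nhdsWithin fun _ hy => by
    obtain ⟨c, r, g, hg, hT⟩ := exists_contDiffOn_ball_image_mem_nhdsWithin hk he he' hy
    exact ⟨_, hT, dimH_lineCone_image_le a hg (convex_ball c r)⟩

end Submanifold

theorem pi1_surjective_of_complement_codim_two_general
    {n m : ℕ}
    {M : Type u} [TopologicalSpace M] [ChartedSpace (EuclideanSpace ℝ (Fin n)) M]
    [IsManifold (𝓡 n) (⊤ : ℕ∞) M]
    {N : Type u} [TopologicalSpace N] [ChartedSpace (EuclideanSpace ℝ (Fin m)) N]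
    [IsManifold (𝓡 m) (⊤ : ℕ∞) N]
    (hdim : m + 2 = n)
    (U : Set M)
    (e : N → M) (he_smooth : ContMDiff (𝓡 m) (𝓡 n) (⊤ : ℕ∞) e) (he_emb : Topology.IsEmbedding e)
    (hcodim : Set.range e = Uᶜ)
    (x : U) :
    Function.Surjective
      (inducedPi1 (⟨Subtype.val, continuous_subtype_val⟩ : C(U, M)) x) := by
  have hUe : U = (range e)ᶜ := by rw [hcodim, compl_compl]
  subst hUe
  have hR : ∀ p a, dimH (lineCone a (chartImage (EuclideanSpace ℝ (Fin n)) (range e) p)) <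
      finrank ℝ (EuclideanSpace ℝ (Fin n)) := fun p a =>
    (dimH_lineCone_chartImage_range_le (by exact_mod_cast le_top) he_smooth he_emb p a).trans_lt
      (by simp only [finrank_euclideanSpace_fin, Nat.cast_lt]; omega)
  have := ChartedSpace.locallyPathConnectedSpace (EuclideanSpace ℝ (Fin n)) M
  have hdense : Dense (range e)ᶜ := dense_compl_of_dimH_chartImage_lt fun p =>
    (dimH_mono (subset_lineCone 0 _)).trans_lt (hR p 0)
  exact inducedPi1_subtypeVal_surjective x fun γ =>
    γ.deformsInto_of_dense hdense (fun p => exists_mem_nhds_pathsDeformInto_compl (hR p)) x.2 x.2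

theorem pi1_surjective_of_complement_codim_two
    {n m : ℕ}
    {M : Type u} [TopologicalSpace M] [ChartedSpace (EuclideanSpace ℝ (Fin n)) M]
    [IsManifold (𝓡 n) (⊤ : ℕ∞) M]
    {N : Type u} [TopologicalSpace N] [ChartedSpace (EuclideanSpace ℝ (Fin m)) N]
    [IsManifold (𝓡 m) (⊤ : ℕ∞) N]
    (hdim : m + 2 = n)
    (U : Set M) (hU : IsOpen U) (hUc : IsClosed Uᶜ)
    (e : N → M) (he_smooth : ContMDiff (𝓡 m) (𝓡 n) (⊤ : ℕ∞) e) (he_emb : Topology.IsEmbedding e)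
    (hcodim : Set.range e = Uᶜ)
    (x : U) :
    Function.Surjective
      (inducedPi1 (⟨Subtype.val, continuous_subtype_val⟩ : C(U, M)) x) :=
  pi1_surjective_of_complement_codim_two_general hdim U e he_smooth he_emb hcodim x
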